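/- arXiv:2003.04385 — 5 statements merged into one kernel-verified Lean document; each statement's English description precedes it below -/
import Mathlib

section
/- If g and f are locally integrable functions on (0,∞) satisfying the Sonine equation (g ∗ f)(t) = 1 for all t > 0, and g is bounded on some interval (0,ε] with ε > 0, then a contradiction follows; i.e., a Sonine function cannot be bounded in any right neighborhood of 0. -/
/-!
If `|g| ≤ M` on `(0, ε]`, then `|(g ∗ f)(t)| ≤ M ∫₀ᵗ |f|` for `t ≤ ε`, and the right-hand side
tends to `0` as `t → 0⁺` by absolute continuity of the integral; so `g ∗ f` cannot be
identically `1`.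
-/

open MeasureTheory Real Set Filter Topology

theorem tendsto_intervalIntegral_self_nhdsGT {E : Type*} [NormedAddCommGroup E] [NormedSpace ℝ E]
    {f : ℝ → E} {a b : ℝ} (hab : a < b) (hf : IntegrableOn f (Ioc a b)) :
    Tendsto (fun t => ∫ u in a..t, f u) (𝓝[>] a) (𝓝 0) := by
  have hcont : ContinuousOn (fun t => ∫ u in a..t, f u) (uIcc a b) :=
    intervalIntegral.continuousOn_primitive_interval
      (by rwa [uIcc_of_le hab.le, integrableOn_Icc_iff_integrableOn_Ioc])
  rw [uIcc_of_le hab.le] at hcont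
  have hge : ContinuousWithinAt (fun t => ∫ u in a..t, f u) (Ici a) a :=
    (hcont a (left_mem_Icc.2 hab.le)).mono_of_mem_nhdsWithin (Icc_mem_nhdsGE hab)
  simpa using (hge.mono Ioi_subset_Ici_self).tendsto

theorem abs_intervalIntegral_mul_sub_le {g f : ℝ → ℝ} {t M : ℝ} (ht : 0 ≤ t)
    (hf : IntervalIntegrable f volume 0 t) (hg : ∀ s ∈ Ioc 0 t, |g s| ≤ M) :
    |∫ s in (0:ℝ)..t, g s * f (t - s)| ≤ M * ∫ u in (0:ℝ)..t, |f u| := by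
  have hbound : IntervalIntegrable (fun s => M * |f (t - s)|) volume 0 t := by
    simpa using (hf.abs.comp_sub_left t).symm.const_mul M
  calc |∫ s in (0:ℝ)..t, g s * f (t - s)|
      ≤ ∫ s in (0:ℝ)..t, M * |f (t - s)| := by
        refine intervalIntegral.norm_integral_le_of_norm_le (f := fun s => g s * f (t - s)) ht
          (ae_of_all _ fun s hs => ?_) hbound
        rw [Real.norm_eq_abs, abs_mul]
        exact mul_le_mul_of_nonneg_right (hg s hs) (abs_nonneg _)
    _ = M * ∫ u in (0:ℝ)..t, |f u| := by
        rw [intervalIntegral.integral_const_mul,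
          intervalIntegral.integral_comp_sub_left (fun u => |f u|), sub_self, sub_zero]

theorem tendsto_intervalIntegral_mul_sub_nhdsGT_zero {g f : ℝ → ℝ} {ε M : ℝ} (hε : 0 < ε)
    (hf : IntegrableOn f (Ioc 0 ε)) (hg : ∀ s ∈ Ioc 0 ε, |g s| ≤ M) :
    Tendsto (fun t => ∫ s in (0:ℝ)..t, g s * f (t - s)) (𝓝[>] 0) (𝓝 0) := by
  have hprim : Tendsto (fun t => M * ∫ u in (0:ℝ)..t, |f u|) (𝓝[>] 0) (𝓝 0) := by
    simpa using (tendsto_intervalIntegral_self_nhdsGT hε hf.abs).const_mul M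
  refine squeeze_zero_norm' ?_ hprim
  filter_upwards [Ioc_mem_nhdsGT hε] with t ht
  exact abs_intervalIntegral_mul_sub_le ht.1.le
    ((intervalIntegrable_iff_integrableOn_Ioc_of_le ht.1.le).2
      (hf.mono_set (Ioc_subset_Ioc_right ht.2)))
    fun s hs => hg s ⟨hs.1, hs.2.trans ht.2⟩

theorem sonine_not_bounded_near_zero_general (g f : ℝ → ℝ)
    (hf : ∀ T > 0, IntegrableOn f (Set.Ioc 0 T))
    (hson : ∀ t > 0, ∫ s in (0:ℝ)..t, g s * f (t - s) = 1)
    (hbdd : ∃ ε > (0:ℝ), ∃ M : ℝ, ∀ t ∈ Set.Ioc (0:ℝ) ε, |g t| ≤ M) :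
    False := by
  obtain ⟨ε, hε, M, hM⟩ := hbdd
  have hzero := tendsto_intervalIntegral_mul_sub_nhdsGT_zero hε (hf ε hε) hM
  have hone : Tendsto (fun t => ∫ s in (0:ℝ)..t, g s * f (t - s)) (𝓝[>] 0) (𝓝 1) :=
    tendsto_const_nhds.congr' (eventually_nhdsWithin_of_forall fun t ht => (hson t ht).symm)
  exact one_ne_zero (tendsto_nhds_unique hone hzero)

/-- A Sonine function cannot be bounded in any right neighborhood of 0. -/
theorem sonine_not_bounded_near_zero (g f : ℝ → ℝ)
    (hg : ∀ T > 0, IntegrableOn g (Set.Ioc 0 T))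
    (hf : ∀ T > 0, IntegrableOn f (Set.Ioc 0 T))
    (hson : ∀ t > 0, ∫ s in (0:ℝ)..t, g s * f (t - s) = 1)
    (hbdd : ∃ ε > (0:ℝ), ∃ M : ℝ, ∀ t ∈ Set.Ioc (0:ℝ) ε, |g t| ≤ M) :
    False :=
  sonine_not_bounded_near_zero_general g f hf hson hbdd
end

section
/- If g, f ∈ L¹_loc([0,∞)) form a Sonine pair and both g and f are non-increasing on some interval (0,ε] with ε > 0, then g(t) → ∞ and f(t) → ∞ as t → 0⁺. -/
/-!
If `g` stayed bounded, say `|g| ≤ C`, on some `(0, ε]`, then for `0 < t ≤ ε`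
`1 = |∫₀ᵗ g(s) f(t - s) ds| ≤ C ∫₀ᵗ |f|`, and the right-hand side tends to `0` as `t → 0⁺`
because `f` is integrable near `0`. An antitone function on `(0, ε]` is bounded below by
its value at `ε`, so it can only fail to be bounded by being unbounded above, and then it
tends to `+∞` at `0⁺`. The convolution is symmetric, so the same applies to `f`.
-/

open MeasureTheory Real Set Filter Topology

def IsSoninePair (g f : ℝ → ℝ) : Prop :=
  ∀ t > 0, ∫ s in (0:ℝ)..t, g s * f (t - s) = 1

theorem intervalIntegral_mul_comp_sub_comm (g f : ℝ → ℝ) (t : ℝ) :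
    ∫ s in (0:ℝ)..t, g s * f (t - s) = ∫ s in (0:ℝ)..t, f s * g (t - s) := by
  simpa [mul_comm] using
    intervalIntegral.integral_comp_sub_left (fun s => f s * g (t - s)) t (a := 0) (b := t)

theorem IsSoninePair.symm {g f : ℝ → ℝ} (h : IsSoninePair g f) : IsSoninePair f g := fun t ht => by
  rw [← intervalIntegral_mul_comp_sub_comm, h t ht]

theorem abs_intervalIntegral_mul_comp_sub_le {g f : ℝ → ℝ} {t C : ℝ} (ht : 0 ≤ t)
    (hf : IntervalIntegrable f volume 0 t) (hg : ∀ s ∈ Ioc 0 t, |g s| ≤ C) :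
    |∫ s in (0:ℝ)..t, g s * f (t - s)| ≤ C * ∫ s in (0:ℝ)..t, |f s| := by
  have hf_refl : IntervalIntegrable (fun s => f (t - s)) volume 0 t := by
    simpa using (hf.comp_sub_left t).symm
  calc |∫ s in (0:ℝ)..t, g s * f (t - s)|
      ≤ ∫ s in (0:ℝ)..t, C * |f (t - s)| := by
        refine intervalIntegral.norm_integral_le_of_norm_le (f := fun s => g s * f (t - s)) ht
          (ae_of_all _ fun s hs => ?_)
          (hf_refl.abs.const_mul C)
        rw [norm_mul, norm_eq_abs, norm_eq_abs]
        exact mul_le_mul_of_nonneg_right (hg s hs) (abs_nonneg _)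
    _ = C * ∫ s in (0:ℝ)..t, |f s| := by
        rw [intervalIntegral.integral_const_mul,
          intervalIntegral.integral_comp_sub_left (fun s => |f s|) t]
        simp

theorem tendsto_intervalIntegral_nhdsGT_zero {f : ℝ → ℝ} {a b : ℝ} (hab : a < b)
    (hf : IntegrableOn f (Ioc a b)) :
    Tendsto (fun t => ∫ s in a..t, f s) (𝓝[>] a) (𝓝 0) := by
  have hcont := intervalIntegral.continuousOn_primitive_interval'
    ((intervalIntegrable_iff_integrableOn_Ioc_of_le hab.le).2 hf) left_mem_uIcc a left_mem_uIcc
  rw [uIcc_of_le hab.le, ContinuousWithinAt, intervalIntegral.integral_same] at hcont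
  rw [← nhdsWithin_Ioc_eq_nhdsGT hab]
  exact hcont.mono_left (nhdsWithin_mono _ Ioc_subset_Icc_self)

theorem IsSoninePair.not_forall_abs_le {g f : ℝ → ℝ} {ε : ℝ} (h : IsSoninePair g f)
    (hε : 0 < ε) (hf : IntegrableOn f (Ioc 0 ε)) (C : ℝ) :
    ¬ ∀ s ∈ Ioc 0 ε, |g s| ≤ C := by
  intro hg
  have hsmall : ∀ᶠ t in 𝓝[>] (0:ℝ), C * ∫ s in (0:ℝ)..t, |f s| < 1 := by
    have := (tendsto_intervalIntegral_nhdsGT_zero hε hf.abs).const_mul C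
    rw [mul_zero] at this
    exact this.eventually (eventually_lt_nhds one_pos)
  obtain ⟨t, ht_small, ht⟩ := (hsmall.and (Ioo_mem_nhdsGT hε)).exists
  have hft : IntervalIntegrable f volume 0 t :=
    (intervalIntegrable_iff_integrableOn_Ioc_of_le ht.1.le).2
      (hf.mono_set (Ioc_subset_Ioc_right ht.2.le))
  have hle := abs_intervalIntegral_mul_comp_sub_le ht.1.le hft
    fun s hs => hg s ⟨hs.1, hs.2.trans ht.2.le⟩
  rw [h t ht.1, abs_one] at hle
  linarith

theorem AntitoneOn.tendsto_atTop_nhdsGT {g : ℝ → ℝ} {a b : ℝ} (hg : AntitoneOn g (Ioc a b))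
    (hunb : ¬ BddAbove (g '' Ioc a b)) : Tendsto g (𝓝[>] a) atTop := by
  refine tendsto_atTop.2 fun M => ?_
  obtain ⟨_, ⟨δ, hδ, rfl⟩, hMδ⟩ := not_bddAbove_iff.1 hunb M
  filter_upwards [Ioo_mem_nhdsGT hδ.1] with t ht
  exact hMδ.le.trans (hg ⟨ht.1, ht.2.le.trans hδ.2⟩ hδ ht.2.le)

theorem AntitoneOn.exists_forall_abs_le {g : ℝ → ℝ} {a b : ℝ} (hg : AntitoneOn g (Ioc a b))
    (hab : a < b) (hbdd : BddAbove (g '' Ioc a b)) : ∃ C, ∀ s ∈ Ioc a b, |g s| ≤ C := by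
  obtain ⟨M, hM⟩ := hbdd
  refine ⟨max M (-g b), fun s hs => abs_le.2 ⟨?_, ?_⟩⟩
  · have : g b ≤ g s := hg hs ⟨hab, le_rfl⟩ hs.2
    linarith [le_max_right M (-g b)]
  · exact (hM (mem_image_of_mem g hs)).trans (le_max_left _ _)

theorem IsSoninePair.tendsto_atTop_of_antitoneOn {g f : ℝ → ℝ} {ε : ℝ} (h : IsSoninePair g f)
    (hε : 0 < ε) (hf : IntegrableOn f (Ioc 0 ε)) (hg : AntitoneOn g (Ioc 0 ε)) :
    Tendsto g (𝓝[>] 0) atTop :=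
  hg.tendsto_atTop_nhdsGT fun hbdd =>
    let ⟨C, hC⟩ := hg.exists_forall_abs_le hε hbdd
    h.not_forall_abs_le hε hf C hC

/-- Members of a Sonine pair, if eventually non-increasing near 0, blow up at 0⁺. -/
theorem sonine_pair_tendsto_atTop (g f : ℝ → ℝ)
    (hg : ∀ T > 0, IntegrableOn g (Set.Ioc 0 T))
    (hf : ∀ T > 0, IntegrableOn f (Set.Ioc 0 T))
    (hson : ∀ t > 0, ∫ s in (0:ℝ)..t, g s * f (t - s) = 1)
    (ε : ℝ) (hε : 0 < ε)
    (hgm : AntitoneOn g (Set.Ioc 0 ε))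
    (hfm : AntitoneOn f (Set.Ioc 0 ε)) :
    Tendsto g (nhdsWithin 0 (Set.Ioi 0)) atTop ∧
      Tendsto f (nhdsWithin 0 (Set.Ioi 0)) atTop := by
  have hpair : IsSoninePair g f := hson
  exact ⟨hpair.tendsto_atTop_of_antitoneOn hε (hf ε hε) hgm,
    hpair.symm.tendsto_atTop_of_antitoneOn hε (hg ε hε) hfm⟩
end

section
/- If g ∈ L¹_loc([0,∞)) and F ∈ L¹_loc([0,∞)) satisfy g ∗ F = 0 a.e. on (0,∞), and g has an associated Sonine function f (i.e., g ∗ f = 1), then F = 0 almost everywhere. Consequently the solution f of the Sonine equation for a given g is unique in L¹_loc. -/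
/-!
Extended by zero to the whole line, `g`, `f` and `F` vanish on `(-∞, 0)` and the truncated
convolutions `∫₀ᵗ` become genuine convolutions on `ℝ`. Since `f ∗ g = 1` on `(0, ∞)`,
associativity gives `∫₀ˣ F = (1 ∗ F)(x) = ((f ∗ g) ∗ F)(x) = (f ∗ (g ∗ F))(x) = 0` for almost
every `x > 0`. The primitive of `F` is continuous, hence vanishes on `(0, ∞)`, and by the
Lebesgue differentiation theorem `F = 0` almost everywhere there. Uniqueness of the Sonine
function is the case `F = f' - f`.
-/

open MeasureTheory Set Filter
open ContinuousLinearMap (mul mul_apply')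
open scoped Convolution

theorem ae_restrict_eq_zero_of_intervalIntegral_eq_zero {E : Type*} [NormedAddCommGroup E]
    [NormedSpace ℝ E] [CompleteSpace E] {φ : ℝ → E} {U : Set ℝ} (hU : IsOpen U) (c : ℝ)
    (hφ : LocallyIntegrable φ) (h : ∀ᵐ x ∂volume.restrict U, ∫ t in c..x, φ t = 0) :
    ∀ᵐ x ∂volume.restrict U, φ x = 0 := by
  have hint : ∀ a b, IntervalIntegrable φ volume a b := fun a b =>
    (hφ.integrableOn_isCompact isCompact_uIcc).intervalIntegrable
  have hP : EqOn (fun x => ∫ t in c..x, φ t) 0 U :=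
    Measure.eqOn_open_of_ae_eq h hU (intervalIntegral.continuous_primitive hint c).continuousOn
      continuousOn_const
  filter_upwards [ae_restrict_mem hU.measurableSet,
    ae_restrict_of_ae (LocallyIntegrable.ae_hasDerivAt_integral hφ)] with x hxU hx
  exact (hx c).unique <| (hasDerivAt_const x (0 : E)).congr_of_eventuallyEq <|
    hP.eventuallyEq_of_mem (hU.mem_nhds hxU)

section Causal

variable {φ ψ χ : ℝ → ℝ}

lemma integrable_indicator_Icc_of_locallyIntegrable (hφ : LocallyIntegrable φ) (a b : ℝ) :
    Integrable ((Icc a b).indicator φ) :=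
  (hφ.integrableOn_isCompact isCompact_Icc).integrable_indicator measurableSet_Icc

lemma mul_comp_sub_eq_indicator_Icc (hφ : ∀ x < 0, φ x = 0) (hψ : ∀ x < 0, ψ x = 0)
    {x T : ℝ} (hxT : x ≤ T) (s : ℝ) :
    φ s * ψ (x - s) = (Icc 0 T).indicator φ s * (Icc 0 T).indicator ψ (x - s) := by
  rcases lt_or_ge s 0 with hs | hs
  · rw [hφ s hs, indicator_of_notMem (fun h : s ∈ Icc 0 T => (not_le.2 hs) h.1) φ, zero_mul,
      zero_mul]
  rcases lt_or_ge (x - s) 0 with hxs | hxs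
  · rw [hψ _ hxs, indicator_of_notMem (fun h : x - s ∈ Icc 0 T => (not_le.2 hxs) h.1) ψ,
      mul_zero, mul_zero]
  rw [indicator_of_mem (show s ∈ Icc 0 T from ⟨hs, by linarith⟩),
    indicator_of_mem (show x - s ∈ Icc 0 T from ⟨hxs, by linarith⟩)]

lemma convolution_eq_convolution_indicator_Icc (hφ : ∀ x < 0, φ x = 0)
    (hψ : ∀ x < 0, ψ x = 0) {x T : ℝ} (hxT : x ≤ T) :
    (φ ⋆[mul ℝ ℝ] ψ) x = ((Icc 0 T).indicator φ ⋆[mul ℝ ℝ] (Icc 0 T).indicator ψ) x := by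
  simp only [convolution_def, mul_apply', mul_comp_sub_eq_indicator_Icc hφ hψ hxT]

lemma convolution_eq_zero_of_neg (hφ : ∀ x < 0, φ x = 0) (hψ : ∀ x < 0, ψ x = 0) {x : ℝ}
    (hx : x < 0) : (φ ⋆[mul ℝ ℝ] ψ) x = 0 := by
  rw [convolution_def]
  refine integral_eq_zero_of_ae (ae_of_all _ fun s => ?_)
  rcases lt_or_ge s 0 with hs | hs
  · simp [hφ s hs]
  · simp [hψ (x - s) (by linarith)]

lemma convolution_eq_intervalIntegral (hφ : ∀ x < 0, φ x = 0) (hψ : ∀ x < 0, ψ x = 0)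
    {x : ℝ} (hx : 0 ≤ x) : (φ ⋆[mul ℝ ℝ] ψ) x = ∫ s in 0..x, φ s * ψ (x - s) := by
  rw [convolution_def, intervalIntegral.integral_of_le hx, ← integral_Icc_eq_integral_Ioc,
    ← setIntegral_eq_integral_of_forall_compl_eq_zero (s := Icc 0 x)]
  · simp only [mul_apply']
  intro s hs
  rcases not_and_or.1 hs with hs | hs
  · rw [mul_apply', hφ s (not_le.1 hs), zero_mul]
  · rw [mul_apply', hψ _ (by linarith [not_le.1 hs]), mul_zero]

lemma ae_convolutionExistsAt (hφ : ∀ x < 0, φ x = 0) (hψ : ∀ x < 0, ψ x = 0)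
    (hφi : LocallyIntegrable φ) (hψi : LocallyIntegrable ψ) :
    ∀ᵐ x, ConvolutionExistsAt φ ψ x (mul ℝ ℝ) := by
  have h : ∀ n : ℕ, ∀ᵐ x,
      ConvolutionExistsAt ((Icc 0 (n : ℝ)).indicator φ) ((Icc 0 (n : ℝ)).indicator ψ) x
        (mul ℝ ℝ) :=
    fun n => Integrable.ae_convolution_exists (L := mul ℝ ℝ)
      (integrable_indicator_Icc_of_locallyIntegrable hφi 0 n)
      (integrable_indicator_Icc_of_locallyIntegrable hψi 0 n)
  filter_upwards [ae_all_iff.2 h] with x hx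
  obtain ⟨n, hn⟩ := exists_nat_ge x
  simpa only [ConvolutionExistsAt, mul_apply', mul_comp_sub_eq_indicator_Icc hφ hψ hn]
    using hx n

lemma locallyIntegrable_convolution (hφ : ∀ x < 0, φ x = 0) (hψ : ∀ x < 0, ψ x = 0)
    (hφi : LocallyIntegrable φ) (hψi : LocallyIntegrable ψ) :
    LocallyIntegrable (φ ⋆[mul ℝ ℝ] ψ) := by
  intro x
  refine ⟨Iic (x + 1), Iic_mem_nhds (by linarith), ?_⟩
  have hT : Integrable ((Icc 0 (x + 1)).indicator φ ⋆[mul ℝ ℝ] (Icc 0 (x + 1)).indicator ψ) :=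
    Integrable.integrable_convolution (mul ℝ ℝ)
      (integrable_indicator_Icc_of_locallyIntegrable hφi 0 (x + 1))
      (integrable_indicator_Icc_of_locallyIntegrable hψi 0 (x + 1))
  exact hT.integrableOn.congr_fun
    (fun y hy => (convolution_eq_convolution_indicator_Icc hφ hψ hy).symm) measurableSet_Iic

lemma convolution_assoc_of_causal (hφ : ∀ x < 0, φ x = 0) (hψ : ∀ x < 0, ψ x = 0)
    (hχ : ∀ x < 0, χ x = 0) (hφi : LocallyIntegrable φ) (hψi : LocallyIntegrable ψ)
    (hχi : LocallyIntegrable χ) :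
    ∀ᵐ x, ((φ ⋆[mul ℝ ℝ] ψ) ⋆[mul ℝ ℝ] χ) x = (φ ⋆[mul ℝ ℝ] (ψ ⋆[mul ℝ ℝ] χ)) x := by
  have norm_causal : ∀ {ρ : ℝ → ℝ}, (∀ x < 0, ρ x = 0) → ∀ x < 0, ‖ρ x‖ = 0 :=
    fun hρ x hx => by rw [hρ x hx, norm_zero]
  have norm_li : ∀ {ρ : ℝ → ℝ}, LocallyIntegrable ρ → LocallyIntegrable fun x => ‖ρ x‖ :=
    fun hρ => locallyIntegrableOn_univ.1 (locallyIntegrableOn_univ.2 hρ).norm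
  have hψχ :=
    ae_convolutionExistsAt (norm_causal hψ) (norm_causal hχ) (norm_li hψi) (norm_li hχi)
  have hφψχ := ae_convolutionExistsAt (norm_causal hφ)
    (fun x hx => convolution_eq_zero_of_neg (norm_causal hψ) (norm_causal hχ) hx) (norm_li hφi)
    (locallyIntegrable_convolution (norm_causal hψ) (norm_causal hχ) (norm_li hψi) (norm_li hχi))
  filter_upwards [hφψχ] with x hx
  exact convolution_assoc _ _ _ _ (fun a b c => mul_assoc a b c) hφi.aestronglyMeasurable
    hψi.aestronglyMeasurable hχi.aestronglyMeasurable (ae_convolutionExistsAt hφ hψ hφi hψi)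
    hψχ hx

theorem ae_eq_zero_of_convolution_eq_zero (hφ : ∀ x < 0, φ x = 0) (hψ : ∀ x < 0, ψ x = 0)
    (hχ : ∀ x < 0, χ x = 0) (hφi : LocallyIntegrable φ) (hψi : LocallyIntegrable ψ)
    (hχi : LocallyIntegrable χ) (hψφ : ∀ x > 0, (ψ ⋆[mul ℝ ℝ] φ) x = 1)
    (hψχ : ψ ⋆[mul ℝ ℝ] χ =ᵐ[volume] 0) :
    ∀ᵐ x ∂volume.restrict (Ioi 0), χ x = 0 := by
  have hφψ : ∀ x > 0, (φ ⋆[mul ℝ ℝ] ψ) x = 1 := by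
    rwa [← convolution_flip, ContinuousLinearMap.flip_mul]
  have hprim : ∀ᵐ x ∂volume.restrict (Ioi 0), ∫ t in 0..x, χ t = 0 := by
    filter_upwards [ae_restrict_of_ae (convolution_assoc_of_causal hφ hψ hχ hφi hψi hχi),
      ae_restrict_mem measurableSet_Ioi] with x hassoc hx
    calc ∫ t in 0..x, χ t
        = ∫ s in 0..x, χ (x - s) := by
          rw [intervalIntegral.integral_comp_sub_left, sub_self, sub_zero]
      _ = ∫ s in 0..x, (φ ⋆[mul ℝ ℝ] ψ) s * χ (x - s) := by
          refine intervalIntegral.integral_congr_ae (ae_of_all _ fun s hs => ?_)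
          rw [uIoc_of_le (le_of_lt hx)] at hs
          rw [hφψ s hs.1, one_mul]
      _ = ((φ ⋆[mul ℝ ℝ] ψ) ⋆[mul ℝ ℝ] χ) x :=
          (convolution_eq_intervalIntegral
            (fun _ hy => convolution_eq_zero_of_neg hφ hψ hy) hχ (le_of_lt hx)).symm
      _ = 0 := by
          rw [hassoc, convolution_congr (L := mul ℝ ℝ) (f := φ) EventuallyEq.rfl hψχ,
            convolution_zero]
          rfl
  exact ae_restrict_eq_zero_of_intervalIntegral_eq_zero isOpen_Ioi 0 hχi hprim

end Causal

lemma indicator_Ici_eq_zero_of_neg (φ : ℝ → ℝ) : ∀ x < 0, (Ici 0).indicator φ x = 0 :=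
  fun _ hx => indicator_of_notMem (not_le.2 hx) φ

lemma locallyIntegrable_indicator_Ici {φ : ℝ → ℝ} (hφ : ∀ T > 0, IntegrableOn φ (Ioc 0 T)) :
    LocallyIntegrable ((Ici 0).indicator φ) := by
  intro x
  refine ⟨Iio (|x| + 1), Iio_mem_nhds (by linarith [le_abs_self x]), ?_⟩
  rw [integrableOn_indicator_iff measurableSet_Ici, Ici_inter_Iio]
  exact ((integrableOn_Icc_iff_integrableOn_Ioc).2 (hφ _ (by positivity))).mono_set
    Ico_subset_Icc_self

lemma indicator_Ici_convolution_eq_intervalIntegral (φ ψ : ℝ → ℝ) {x : ℝ} (hx : 0 ≤ x) :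
    ((Ici 0).indicator φ ⋆[mul ℝ ℝ] (Ici 0).indicator ψ) x = ∫ s in 0..x, φ s * ψ (x - s) := by
  rw [convolution_eq_intervalIntegral (indicator_Ici_eq_zero_of_neg φ)
    (indicator_Ici_eq_zero_of_neg ψ) hx]
  refine intervalIntegral.integral_congr fun s hs => ?_
  rw [uIcc_of_le hx] at hs
  rw [indicator_of_mem (show s ∈ Ici 0 from hs.1),
    indicator_of_mem (show x - s ∈ Ici 0 from sub_nonneg.2 hs.2)]

theorem ae_eq_zero_of_intervalIntegral_mul_sub_eq_zero {g F f : ℝ → ℝ}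
    (hg : ∀ T > 0, IntegrableOn g (Ioc 0 T)) (hF : ∀ T > 0, IntegrableOn F (Ioc 0 T))
    (hf : ∀ T > 0, IntegrableOn f (Ioc 0 T))
    (hson : ∀ t > 0, ∫ s in (0:ℝ)..t, g s * f (t - s) = 1)
    (hconv : ∀ᵐ t ∂(volume.restrict (Ioi (0:ℝ))), ∫ s in (0:ℝ)..t, g s * F (t - s) = 0) :
    ∀ᵐ t ∂(volume.restrict (Ioi (0:ℝ))), F t = 0 := by
  have hgF : (Ici 0).indicator g ⋆[mul ℝ ℝ] (Ici 0).indicator F =ᵐ[volume] 0 := by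
    filter_upwards [ae_imp_of_ae_restrict hconv] with x hx
    rcases lt_or_ge x 0 with hneg | hnonneg
    · exact convolution_eq_zero_of_neg (indicator_Ici_eq_zero_of_neg g)
        (indicator_Ici_eq_zero_of_neg F) hneg
    rw [indicator_Ici_convolution_eq_intervalIntegral g F hnonneg]
    rcases hnonneg.eq_or_lt with rfl | hpos
    · exact intervalIntegral.integral_same
    · exact hx hpos
  filter_upwards [ae_eq_zero_of_convolution_eq_zero (indicator_Ici_eq_zero_of_neg f)
      (indicator_Ici_eq_zero_of_neg g) (indicator_Ici_eq_zero_of_neg F)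
      (locallyIntegrable_indicator_Ici hf) (locallyIntegrable_indicator_Ici hg)
      (locallyIntegrable_indicator_Ici hF)
      (fun x hx => by rw [indicator_Ici_convolution_eq_intervalIntegral g f hx.le, hson x hx])
      hgF, ae_restrict_mem measurableSet_Ioi] with x hx hpos
  rwa [← indicator_of_mem (Ioi_subset_Ici_self hpos) F]

/-- If g∗F = 0 a.e. on (0,∞) and g has an associated Sonine function f, then F = 0 a.e.;
consequently the associated Sonine function is unique in L¹_loc. -/
theorem sonine_unique (g F f : ℝ → ℝ)
    (hg : ∀ T > 0, IntegrableOn g (Set.Ioc 0 T))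
    (hF : ∀ T > 0, IntegrableOn F (Set.Ioc 0 T))
    (hf : ∀ T > 0, IntegrableOn f (Set.Ioc 0 T))
    (hson : ∀ t > 0, ∫ s in (0:ℝ)..t, g s * f (t - s) = 1)
    (hconv : ∀ᵐ t ∂(volume.restrict (Set.Ioi (0:ℝ))),
      ∫ s in (0:ℝ)..t, g s * F (t - s) = 0) :
    (∀ᵐ t ∂(volume.restrict (Set.Ioi (0:ℝ))), F t = 0) ∧
      ∀ f' : ℝ → ℝ, (∀ T > 0, IntegrableOn f' (Set.Ioc 0 T)) →
        (∀ t > 0, ∫ s in (0:ℝ)..t, g s * f' (t - s) = 1) →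
        (∀ᵐ t ∂(volume.restrict (Set.Ioi (0:ℝ))), f' t = f t) := by
  refine ⟨ae_eq_zero_of_intervalIntegral_mul_sub_eq_zero hg hF hf hson hconv,
    fun f' hf' hson' => ?_⟩
  have hdiff : ∀ᵐ t ∂(volume.restrict (Ioi (0:ℝ))),
      ∫ s in (0:ℝ)..t, g s * (f' - f) (t - s) = 0 := by
    filter_upwards [ae_restrict_mem measurableSet_Ioi] with t ht
    -- an integral equal to `1` is not the junk value `0`, so its integrand is integrable
    have h' := intervalIntegral.intervalIntegrable_of_integral_ne_zero
      ((hson' t ht).symm ▸ one_ne_zero)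
    have h := intervalIntegral.intervalIntegrable_of_integral_ne_zero
      ((hson t ht).symm ▸ one_ne_zero)
    simp only [Pi.sub_apply, mul_sub]
    rw [intervalIntegral.integral_sub h' h, hson' t ht, hson t ht, sub_self]
  filter_upwards [ae_eq_zero_of_intervalIntegral_mul_sub_eq_zero hg
    (fun T hT => (hf' T hT).sub (hf T hT)) hf hson hdiff] with t ht
  exact sub_eq_zero.1 ht
end

section
/- If g, f ∈ L¹_loc satisfy the Sonine equation g∗f = 1, then for every C¹ function φ on [0,∞), D(g ∗ (f ∗ φ))(t) = φ(t) for all t > 0, i.e., the generalized fractional derivative D_g is a left inverse of the generalized fractional integral I_f. -/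
/-!
With `laplaceConv g f t = ∫₀ᵗ g(s) f(t - s) ds` (the convolution `g ∗ f` of the statement),
associativity gives `g ∗ (f ∗ φ) = (g ∗ f) ∗ φ = 1 ∗ φ = ∫₀ᵗ φ`, whose derivative is `φ t`.
Associativity is `MeasureTheory.convolution_assoc'` applied to the extensions of `g`, `f`, `φ` by
zero outside `[0, τ]`: evaluated at points of `[0, τ]`, their convolutions are the truncated ones.
-/

open MeasureTheory Real Set Filter
open scoped Convolution
open ContinuousLinearMap (mul)

noncomputable def laplaceConv (g f : ℝ → ℝ) (t : ℝ) : ℝ := ∫ s in (0:ℝ)..t, g s * f (t - s)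

theorem convolution_indicator_Icc {τ x : ℝ} (hx : x ∈ Icc 0 τ) (A B : ℝ → ℝ) :
    ((Icc 0 τ).indicator A ⋆[mul ℝ ℝ] (Icc 0 τ).indicator B) x = laplaceConv A B x := by
  have hsupp : (fun s => (Icc 0 τ).indicator A s * (Icc 0 τ).indicator B (x - s))
      = (Icc 0 x).indicator fun s => A s * B (x - s) := by
    ext s
    by_cases hs : s ∈ Icc 0 x
    · have hs' : s ∈ Icc 0 τ := ⟨hs.1, hs.2.trans hx.2⟩
      have hxs : x - s ∈ Icc 0 τ := ⟨by linarith [hs.2], by linarith [hs.1, hx.2]⟩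
      simp only [indicator_of_mem hs, indicator_of_mem hs', indicator_of_mem hxs]
    · rw [indicator_of_notMem hs]
      by_cases hs' : s ∈ Icc 0 τ
      · have hxs : x - s ∉ Icc 0 τ := fun h => hs ⟨hs'.1, by linarith [h.1]⟩
        rw [indicator_of_notMem hxs, mul_zero]
      · rw [indicator_of_notMem hs', zero_mul]
  rw [convolution_mul, hsupp, integral_indicator measurableSet_Icc, integral_Icc_eq_integral_Ioc,
    laplaceConv, intervalIntegral.integral_of_le hx.1]

theorem convolution_indicator_Icc_eq_of_eqOn {τ : ℝ} {A u v : ℝ → ℝ} (h : EqOn u v (Icc 0 τ)) :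
    ((Icc 0 τ).indicator A ⋆[mul ℝ ℝ] u) τ = ((Icc 0 τ).indicator A ⋆[mul ℝ ℝ] v) τ := by
  simp only [convolution_mul]
  congr 1 with s
  by_cases hs : s ∈ Icc 0 τ
  · rw [h ⟨by linarith [hs.2], by linarith [hs.1]⟩]
  · simp only [indicator_of_notMem hs, zero_mul]

theorem convolution_eq_of_eqOn_indicator_Icc {τ : ℝ} {B u v : ℝ → ℝ} (h : EqOn u v (Icc 0 τ)) :
    (u ⋆[mul ℝ ℝ] (Icc 0 τ).indicator B) τ = (v ⋆[mul ℝ ℝ] (Icc 0 τ).indicator B) τ := by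
  simp only [convolution_mul]
  congr 1 with s
  by_cases hs : s ∈ Icc 0 τ
  · rw [h hs]
  · have hτs : τ - s ∉ Icc 0 τ := fun h' => hs ⟨by linarith [h'.2], by linarith [h'.1]⟩
    simp only [indicator_of_notMem hτs, mul_zero]

theorem laplaceConv_assoc {g f φ : ℝ → ℝ} {τ : ℝ} (hτ : 0 ≤ τ) (hg : IntegrableOn g (Ioc 0 τ))
    (hf : IntegrableOn f (Ioc 0 τ)) (hφ : ContinuousOn φ (Icc 0 τ)) :
    laplaceConv g (laplaceConv f φ) τ = laplaceConv (laplaceConv g f) φ τ := by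
  set G := (Icc 0 τ).indicator g
  set F := (Icc 0 τ).indicator f
  set K := (Icc 0 τ).indicator φ
  have hG : Integrable G := (integrable_indicator_iff measurableSet_Icc).2
    ((integrableOn_Icc_iff_integrableOn_Ioc).2 hg)
  have hF : Integrable F := (integrable_indicator_iff measurableSet_Icc).2
    ((integrableOn_Icc_iff_integrableOn_Ioc).2 hf)
  have hK : Integrable K := (integrable_indicator_iff measurableSet_Icc).2 hφ.integrableOn_Icc
  obtain ⟨C, hC⟩ := isCompact_Icc.exists_bound_of_continuousOn hφ
  have hK_bdd : ∀ x, ‖K x‖ ≤ max C 0 := fun x => by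
    by_cases hx : x ∈ Icc 0 τ
    · simpa only [K, indicator_of_mem hx] using (hC x hx).trans (le_max_left C 0)
    · simp [K, indicator_of_notMem hx]
  have hGFK : Integrable
      (Function.uncurry fun x y => mul ℝ ℝ (G y) (mul ℝ ℝ (F (x - y)) (K (τ - x))))
      (volume.prod volume) := by
    have := (hG.convolution_integrand (mul ℝ ℝ) hF).mul_bdd
      (hK.comp_sub_left τ).aestronglyMeasurable.comp_fst
      (Eventually.of_forall fun p => hK_bdd (τ - p.1))
    simpa [Function.uncurry_def, mul_assoc] using this
  have hassoc := convolution_assoc' (mul ℝ ℝ) (mul ℝ ℝ) (mul ℝ ℝ) (mul ℝ ℝ)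
    (fun a b c => mul_assoc a b c) (hG.ae_convolution_exists (mul ℝ ℝ) hF)
    (hF.ae_convolution_exists (mul ℝ ℝ) hK) hGFK
  calc laplaceConv g (laplaceConv f φ) τ
      = (G ⋆[mul ℝ ℝ] (Icc 0 τ).indicator (laplaceConv f φ)) τ :=
        (convolution_indicator_Icc ⟨hτ, le_rfl⟩ g _).symm
    _ = (G ⋆[mul ℝ ℝ] (F ⋆[mul ℝ ℝ] K)) τ := convolution_indicator_Icc_eq_of_eqOn fun x hx => by
        rw [indicator_of_mem hx, convolution_indicator_Icc hx]
    _ = ((G ⋆[mul ℝ ℝ] F) ⋆[mul ℝ ℝ] K) τ := hassoc.symm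
    _ = ((Icc 0 τ).indicator (laplaceConv g f) ⋆[mul ℝ ℝ] K) τ :=
        convolution_eq_of_eqOn_indicator_Icc fun x hx => by
          rw [indicator_of_mem hx, convolution_indicator_Icc hx]
    _ = laplaceConv (laplaceConv g f) φ τ := convolution_indicator_Icc ⟨hτ, le_rfl⟩ _ φ

theorem laplaceConv_eq_integral_of_eqOn_one {u φ : ℝ → ℝ} {τ : ℝ} (hτ : 0 ≤ τ)
    (hu : EqOn u 1 (Ioc 0 τ)) : laplaceConv u φ τ = ∫ v in (0:ℝ)..τ, φ v := by
  have hu_one : ∫ v in (0:ℝ)..τ, u v * φ (τ - v) = ∫ v in (0:ℝ)..τ, φ (τ - v) :=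
    intervalIntegral.integral_congr_ae <| .of_forall fun v hv => by
      rw [uIoc_of_le hτ] at hv
      rw [hu hv, Pi.one_apply, one_mul]
  simp [laplaceConv, hu_one, intervalIntegral.integral_comp_sub_left]

theorem hasDerivAt_integral_of_continuousOn_Ici {φ : ℝ → ℝ} (hφ : ContinuousOn φ (Ici 0)) {t : ℝ}
    (ht : 0 < t) : HasDerivAt (fun τ => ∫ u in (0:ℝ)..τ, φ u) (φ t) t :=
  intervalIntegral.integral_hasDerivAt_right
    (hφ.mono (uIcc_of_le ht.le ▸ Icc_subset_Ici_self)).intervalIntegrable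
    ((hφ.mono Ioi_subset_Ici_self).stronglyMeasurableAtFilter isOpen_Ioi t ht)
    (hφ.continuousAt (Ici_mem_nhds ht))

/-- If g∗f = 1 then D_g is a left inverse of I_f: D(g∗(f∗φ))(t) = φ(t) for C¹ φ. -/
theorem Dg_leftInverse_If (g f φ : ℝ → ℝ)
    (hg : ∀ T > 0, IntegrableOn g (Set.Ioc 0 T))
    (hf : ∀ T > 0, IntegrableOn f (Set.Ioc 0 T))
    (hson : ∀ t > 0, ∫ s in (0:ℝ)..t, g s * f (t - s) = 1)
    (hφ : ContDiffOn ℝ 1 φ (Set.Ici 0)) :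
    ∀ t > 0,
      HasDerivAt
        (fun τ => ∫ s in (0:ℝ)..τ, g s * (∫ u in (0:ℝ)..(τ - s), f u * φ (τ - s - u)))
        (φ t) t := by
  intro t ht
  have hφc : ContinuousOn φ (Ici 0) := hφ.continuousOn
  refine (hasDerivAt_integral_of_continuousOn_Ici hφc ht).congr_of_eventuallyEq ?_
  filter_upwards [Ioi_mem_nhds ht] with τ hτ
  change laplaceConv g (laplaceConv f φ) τ = _
  rw [laplaceConv_assoc hτ.le (hg τ hτ) (hf τ hτ) (hφc.mono Icc_subset_Ici_self)]
  exact laplaceConv_eq_integral_of_eqOn_one hτ.le fun v hv => hson v hv.1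
end

section
/- For 0 < α ≤ 1, g(t) = E_α(−t^α) satisfies g(t) + ∫₀ᵗ g(s)·(t−s)^{α−1}/Γ(α) ds = 1 for all t > 0, where E_α is the Mittag-Leffler function. -/
/-!
Expanding `E_α(-s^α) = ∑ (-1)ⁿ s^(αn) / Γ(αn+1)` and integrating termwise, the Beta integral
gives `∫₀ᵗ s^(αn) (t-s)^(α-1) / Γ(α) ds = Γ(αn+1) / Γ(α(n+1)+1) · t^(α(n+1))`, so the convolution
is the Mittag-Leffler series at `-t^α` shifted by one index and negated, i.e. `1 - E_α(-t^α)`.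
Termwise integration is justified by dominated convergence against the series of `E_α(t^α)`,
whose convergence for `α ≤ 1` follows from the ratio test and the log-convexity bound
`Γ(x+1-α) x^α ≤ Γ(x+1)`.
-/

open MeasureTheory Real Set Filter

noncomputable def mittagLeffler (α z : ℝ) : ℝ :=
  ∑' n : ℕ, z ^ n / Real.Gamma (α * n + 1)

theorem Real.Gamma_add_one_sub_mul_rpow_le {x α : ℝ} (hx : 0 < x) (hα0 : 0 ≤ α) (hα1 : α ≤ 1) :
    Gamma (x + 1 - α) * x ^ α ≤ Gamma (x + 1) := by
  have hconv := convexOn_log_Gamma.2 (mem_Ioi.2 hx) (mem_Ioi.2 (by linarith : (0:ℝ) < x + 1))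
    hα0 (sub_nonneg.2 hα1) (add_sub_cancel α 1)
  simp only [Function.comp_apply, smul_eq_mul] at hconv
  rw [show α * x + (1 - α) * (x + 1) = x + 1 - α by ring, Gamma_add_one hx.ne',
    log_mul hx.ne' (Gamma_pos_of_pos hx).ne'] at hconv
  have hΓ : 0 < Gamma (x + 1 - α) := Gamma_pos_of_pos (by linarith)
  rw [← log_le_log_iff (by positivity) (by positivity), Gamma_add_one hx.ne',
    log_mul hΓ.ne' (by positivity), log_rpow hx, log_mul hx.ne' (Gamma_pos_of_pos hx).ne']
  linarith

theorem intervalIntegral.integral_rpow_mul_sub_rpow {a s t : ℝ} (ha : 0 < a) (hs : 0 < s)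
    (ht : 0 < t) :
    ∫ x in 0..a, x ^ (s - 1) * (a - x) ^ (t - 1)
      = Gamma s * Gamma t / Gamma (s + t) * a ^ (s + t - 1) := by
  apply Complex.ofReal_injective
  have hbeta := Complex.betaIntegral_scaled s t ha
  rw [Complex.betaIntegral_eq_Gamma_mul_div _ _ (by simpa) (by simpa)] at hbeta
  rw [← intervalIntegral.integral_ofReal, Complex.ofReal_mul, Complex.ofReal_cpow ha.le,
    Complex.ofReal_div, Complex.ofReal_mul]
  simp only [← Complex.Gamma_ofReal]
  push_cast
  rw [mul_comm, ← hbeta]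
  refine intervalIntegral.integral_congr fun x hx => ?_
  rw [uIcc_of_le ha.le] at hx
  simp only [Complex.ofReal_cpow hx.1, Complex.ofReal_cpow (sub_nonneg.2 hx.2)]
  push_cast
  rfl

theorem intervalIntegral.integral_rpow_mul_sub_rpow_div_Gamma {p α t : ℝ} (hp : -1 < p)
    (hα : 0 < α) (ht : 0 < t) :
    ∫ s in 0..t, s ^ p * ((t - s) ^ (α - 1) / Gamma α)
      = Gamma (p + 1) / Gamma (p + 1 + α) * t ^ (p + α) := by
  have hbeta := integral_rpow_mul_sub_rpow ht (by linarith : 0 < p + 1) hα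
  rw [add_sub_cancel_right, show p + 1 + α - 1 = p + α by ring] at hbeta
  simp only [← mul_div_assoc, intervalIntegral.integral_div, hbeta]
  field_simp [(Gamma_pos_of_pos hα).ne']

theorem summable_mittagLeffler {α : ℝ} (hα0 : 0 < α) (hα1 : α ≤ 1) (z : ℝ) :
    Summable fun n : ℕ => z ^ n / Gamma (α * n + 1) := by
  set r : ℕ → ℝ := fun n => |z| / (α * (n + 1)) ^ α
  have hr : Tendsto r atTop (nhds 0) := by
    refine tendsto_const_nhds.div_atTop ((tendsto_rpow_atTop hα0).comp ?_)
    exact (tendsto_natCast_atTop_atTop.atTop_add tendsto_const_nhds).const_mul_atTop hα0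
  refine summable_of_ratio_norm_eventually_le (r := 1 / 2) (by norm_num) ?_
  filter_upwards [hr.eventually (ge_mem_nhds (by norm_num : (0:ℝ) < 1 / 2))] with n hn
  have hx : 0 < α * (n + 1) := by positivity
  have hΓ : 0 < Gamma (α * n + 1) := Gamma_pos_of_pos (by positivity)
  have hratio : Gamma (α * n + 1) * (α * (n + 1)) ^ α ≤ Gamma (α * ↑(n + 1) + 1) := by
    have := Gamma_add_one_sub_mul_rpow_le hx hα0.le hα1
    rw [show α * (n + 1) + 1 - α = α * n + 1 by ring] at this
    exact_mod_cast this
  calc ‖z ^ (n + 1) / Gamma (α * ↑(n + 1) + 1)‖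
      ≤ |z| * ‖z ^ n‖ / (Gamma (α * n + 1) * (α * (n + 1)) ^ α) := by
        rw [norm_div, Real.norm_of_nonneg (Gamma_pos_of_pos (by positivity)).le, norm_pow,
          norm_pow, pow_succ, mul_comm, Real.norm_eq_abs]
        gcongr
    _ = r n * ‖z ^ n / Gamma (α * n + 1)‖ := by
        simp only [r, norm_div, Real.norm_of_nonneg hΓ.le]; ring
    _ ≤ 1 / 2 * ‖z ^ n / Gamma (α * n + 1)‖ := by gcongr

theorem integral_mittagLeffler_term_mul_sub_rpow_div_Gamma {α t : ℝ} (hα : 0 < α) (ht : 0 < t)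
    (n : ℕ) :
    ∫ s in 0..t, (-(s ^ α)) ^ n / Gamma (α * n + 1) * ((t - s) ^ (α - 1) / Gamma α)
      = -((-(t ^ α)) ^ (n + 1) / Gamma (α * ↑(n + 1) + 1)) := by
  have hpow : ∀ {s : ℝ}, 0 ≤ s → ∀ m : ℕ, (-(s ^ α)) ^ m = (-1) ^ m * s ^ (α * m) := by
    intro s hs m
    rw [neg_pow, rpow_mul_natCast hs]
  have hterm : ∫ s in 0..t, (-(s ^ α)) ^ n / Gamma (α * n + 1) * ((t - s) ^ (α - 1) / Gamma α)
      = ∫ s in 0..t,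
          (-1) ^ n / Gamma (α * n + 1) * (s ^ (α * n) * ((t - s) ^ (α - 1) / Gamma α)) := by
    refine intervalIntegral.integral_congr fun s hs => ?_
    rw [uIcc_of_le ht.le] at hs
    simp only [hpow hs.1]
    ring
  have hp : -1 < α * n := neg_one_lt_zero.trans_le (by positivity)
  rw [hterm, intervalIntegral.integral_const_mul,
    intervalIntegral.integral_rpow_mul_sub_rpow_div_Gamma hp hα ht, hpow ht.le,
    show α * ↑(n + 1) + 1 = α * n + 1 + α by push_cast; ring,
    show α * n + α = α * ↑(n + 1) by push_cast; ring]
  field_simp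
  ring

theorem hasSum_integral_mittagLeffler_term_mul_sub_rpow_div_Gamma {α t : ℝ} (hα0 : 0 < α)
    (hα1 : α ≤ 1) (ht : 0 ≤ t) :
    HasSum (fun n : ℕ =>
        ∫ s in 0..t, (-(s ^ α)) ^ n / Gamma (α * n + 1) * ((t - s) ^ (α - 1) / Gamma α))
      (∫ s in 0..t, mittagLeffler α (-(s ^ α)) * ((t - s) ^ (α - 1) / Gamma α)) := by
  have hkernel : IntervalIntegrable (fun s => (t - s) ^ (α - 1) / Gamma α) volume 0 t := by
    have := (intervalIntegral.intervalIntegrable_rpow' (a := t) (b := 0) (r := α - 1)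
      (by linarith)).comp_sub_left t
    simpa only [sub_zero, sub_self] using this.div_const (Gamma α)
  refine intervalIntegral.hasSum_integral_of_dominated_convergence
    (fun n s => (t ^ α) ^ n / Gamma (α * n + 1) * ((t - s) ^ (α - 1) / Gamma α))
    (fun n => (by fun_prop : Measurable _).aestronglyMeasurable) ?_ ?_ ?_ ?_
  · refine fun n => ae_of_all _ fun s hs => ?_
    rw [uIoc_of_le ht] at hs
    have hΓ : 0 < Gamma (α * n + 1) := Gamma_pos_of_pos (by positivity)
    have hk : 0 ≤ (t - s) ^ (α - 1) / Gamma α :=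
      div_nonneg (rpow_nonneg (sub_nonneg.2 hs.2) _) (Gamma_pos_of_pos hα0).le
    rw [norm_mul, norm_div, norm_pow, norm_neg, Real.norm_of_nonneg hk,
      Real.norm_of_nonneg hΓ.le, Real.norm_of_nonneg (rpow_nonneg hs.1.le _)]
    have := rpow_le_rpow hs.1.le hs.2 hα0.le
    gcongr
    exact rpow_nonneg hs.1.le _
  · exact ae_of_all _ fun s _ => (summable_mittagLeffler hα0 hα1 _).mul_right _
  · simp only [tsum_mul_right]
    exact hkernel.const_mul _
  · exact ae_of_all _ fun s _ => (summable_mittagLeffler hα0 hα1 _).hasSum.mul_right _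

/-- For 0 < α ≤ 1, g(t) = E_α(-t^α) satisfies g + g∗(t^{α-1}/Γ(α)) = 1. -/
theorem mittagLeffler_decomposition (α : ℝ) (hα0 : 0 < α) (hα1 : α ≤ 1) :
    ∀ t > (0:ℝ),
      mittagLeffler α (-(t ^ α)) +
        (∫ s in (0:ℝ)..t,
          mittagLeffler α (-(s ^ α)) * ((t - s) ^ (α - 1) / Real.Gamma α)) = 1 := by
  intro t ht
  have hconv := hasSum_integral_mittagLeffler_term_mul_sub_rpow_div_Gamma hα0 hα1 ht.le
  simp only [integral_mittagLeffler_term_mul_sub_rpow_div_Gamma hα0 ht] at hconv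
  have htail : HasSum (fun n : ℕ => (-(t ^ α)) ^ (n + 1) / Gamma (α * ↑(n + 1) + 1))
      (mittagLeffler α (-(t ^ α)) - 1) := by
    have := (summable_mittagLeffler hα0 hα1 (-(t ^ α))).hasSum
    rw [← hasSum_nat_add_iff' 1] at this
    simpa [mittagLeffler, Gamma_one] using this
  linarith [hconv.unique htail.neg]
end
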